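/- arXiv:1802.00609 — 2 statements merged into one kernel-verified Lean document; each statement's English description precedes it below -/
import Mathlib

section
/- For every symmetric real matrix M and real matrices B and P of compatible sizes, the inequality M - Bᵀ P - Pᵀ B ⪰ 0 holds if and only if there exist (not necessarily symmetric) matrices Υ and Ξ such that the block matrix [[M - BᵀΥ - ΥᵀB, Υᵀ - Pᵀ - BᵀΞ], [Υ - P - ΞᵀB, Ξ + Ξᵀ]] is positive semidefinite. -/
/-!
Compressing the block matrix by the congruence `[1; B]ᵀ · _ · [1; B]` gives back
`M - Bᵀ P - Pᵀ B` whatever `Υ` and `Ξ` are, so positivity of the block matrix implies that of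
`M - Bᵀ P - Pᵀ B`. Conversely, `Υ = P` and `Ξ = 0` make the block matrix
`diag (M - Bᵀ P - Pᵀ B, 0)`.
-/

open Matrix

namespace Matrix

variable {m k R : Type*} [Fintype m] [Fintype k] [DecidableEq m]

theorem PosSemidef.fromBlocks_zero_zero_zero [Ring R] [PartialOrder R] [StarRing R]
    {A : Matrix m m R} (hA : A.PosSemidef) :
    (fromBlocks A 0 0 (0 : Matrix k k R)).PosSemidef := by
  have h := hA.mul_mul_conjTranspose_same (fromRows (1 : Matrix m m R) (0 : Matrix k m R))
  rw [conjTranspose_fromRows_eq_fromCols_conjTranspose, fromRows_mul, fromRows_mul_fromCols]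
    at h
  simpa using h

theorem transpose_fromRows_one_mul_fromBlocks_mul_fromRows_one [CommRing R]
    (M : Matrix m m R) (B P Υ : Matrix k m R) (Ξ : Matrix k k R) :
    (fromRows (1 : Matrix m m R) B)ᵀ * fromBlocks (M - Bᵀ * Υ - Υᵀ * B) (Υᵀ - Pᵀ - Bᵀ * Ξ)
        (Υ - P - Ξᵀ * B) (Ξ + Ξᵀ) * fromRows (1 : Matrix m m R) B = M - Bᵀ * P - Pᵀ * B := by
  rw [Matrix.mul_assoc, fromBlocks_mul_fromRows, transpose_fromRows, fromCols_mul_fromRows]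
  simp only [transpose_one, Matrix.one_mul, Matrix.mul_one, Matrix.mul_sub, Matrix.sub_mul,
    Matrix.mul_add, Matrix.add_mul, Matrix.mul_assoc]
  abel

end Matrix

theorem stmt0_general {n : ℕ} (M B P : Matrix (Fin n) (Fin n) ℝ) :
    (M - Bᵀ * P - Pᵀ * B).PosSemidef ↔
      ∃ Υ Ξ : Matrix (Fin n) (Fin n) ℝ,
        (Matrix.fromBlocks (M - Bᵀ * Υ - Υᵀ * B) (Υᵀ - Pᵀ - Bᵀ * Ξ)
          (Υ - P - Ξᵀ * B) (Ξ + Ξᵀ)).PosSemidef := by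
  constructor
  · intro h
    refine ⟨P, 0, ?_⟩
    simpa using h.fromBlocks_zero_zero_zero
  · rintro ⟨Υ, Ξ, h⟩
    have h' := h.conjTranspose_mul_mul_same (fromRows (1 : Matrix (Fin n) (Fin n) ℝ) B)
    rwa [conjTranspose_eq_transpose_of_trivial,
      transpose_fromRows_one_mul_fromBlocks_mul_fromRows_one] at h'

theorem stmt0 {n : ℕ} (M B P : Matrix (Fin n) (Fin n) ℝ) (hM : M.IsSymm) :
    (M - Bᵀ * P - Pᵀ * B).PosSemidef ↔
      ∃ Υ Ξ : Matrix (Fin n) (Fin n) ℝ,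
        (Matrix.fromBlocks (M - Bᵀ * Υ - Υᵀ * B) (Υᵀ - Pᵀ - Bᵀ * Ξ)
          (Υ - P - Ξᵀ * B) (Ξ + Ξᵀ)).PosSemidef :=
  stmt0_general M B P
end

section
/- Let P, B_k ∈ ℝ^{n×n} with P positive definite, Λ ∈ ℝ^{n×n} positive definite diagonal, ρ_k > 0, σ_k > 0, and ε > 0. Suppose the block matrix G_k = [[Λ − (σ_k+ε)I_n − B_kᵀP − PB_k, ρ_k P], [ρ_k P, σ_k I_n]] is positive definite. Then for every matrix Φ ∈ ℝ^{n×n} with ‖Φ‖ ≤ 1 (operator norm), setting B = B_k + ρ_k Φ, one has Λ − BᵀP − PB ⪰ ε I_n. -/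
/-!
Put `y = Φ x`. Testing the block matrix `G = [[A, C], [Cᴴ, σ I]]` on the vector `(x, -y)`, i.e.
conjugating it by `[I; -Φ]`, gives `A - CΦ - ΦᴴCᴴ + σ ΦᴴΦ ⪰ 0`; since `Φ` is a contraction,
`σ (I - ΦᴴΦ) ⪰ 0`, and the sum of the two is `A + σ I - CΦ - ΦᴴCᴴ`. With `C = ρ P` and
`A = Λ - (σ + ε) I - BₖᵀP - PBₖ` this is `Λ - BᵀP - PB - ε I` for `B = Bₖ + ρ Φ`.
-/

open Matrix

namespace Matrix

variable {m k R : Type*} [Fintype m] [Fintype k] [DecidableEq m]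

theorem posSemidef_one_sub_conjTranspose_mul_self [Ring R] [PartialOrder R] [StarRing R]
    [IsOrderedAddMonoid R] {Φ : Matrix k m R}
    (hΦ : ∀ x, star (Φ *ᵥ x) ⬝ᵥ (Φ *ᵥ x) ≤ star x ⬝ᵥ x) :
    (1 - Φᴴ * Φ).PosSemidef := by
  refine .of_dotProduct_mulVec_nonneg (isHermitian_one.sub (isHermitian_conjTranspose_mul_self Φ))
    fun x ↦ ?_
  rw [sub_mulVec, one_mulVec, dotProduct_sub, ← mulVec_mulVec, dotProduct_mulVec, ← star_mulVec,
    sub_nonneg]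
  exact hΦ x

theorem conjTranspose_fromRows_one_neg_mul_fromBlocks_mul [Ring R] [StarRing R]
    (A : Matrix m m R) (C : Matrix m k R) (D : Matrix k k R) (Φ : Matrix k m R) :
    (fromRows (1 : Matrix m m R) (-Φ))ᴴ * fromBlocks A C Cᴴ D * fromRows (1 : Matrix m m R) (-Φ) =
      A - C * Φ - Φᴴ * Cᴴ + Φᴴ * D * Φ := by
  rw [Matrix.mul_assoc, fromBlocks_mul_fromRows, conjTranspose_fromRows_eq_fromCols_conjTranspose,
    fromCols_mul_fromRows]
  simp only [Matrix.mul_one, Matrix.one_mul, Matrix.mul_neg, conjTranspose_one, conjTranspose_neg,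
    Matrix.neg_mul, Matrix.mul_add, Matrix.mul_assoc]
  abel

theorem posSemidef_add_smul_one_sub_of_fromBlocks [DecidableEq k] [CommRing R] [PartialOrder R]
    [StarRing R] [StarOrderedRing R] {A : Matrix m m R} {C : Matrix m k R} {σ : R}
    (hG : (fromBlocks A C Cᴴ (σ • 1)).PosSemidef) (hσ : 0 ≤ σ) {Φ : Matrix k m R}
    (hΦ : ∀ x, star (Φ *ᵥ x) ⬝ᵥ (Φ *ᵥ x) ≤ star x ⬝ᵥ x) :
    (A + σ • 1 - C * Φ - Φᴴ * Cᴴ).PosSemidef := by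
  have : A + σ • 1 - C * Φ - Φᴴ * Cᴴ =
      (fromRows (1 : Matrix m m R) (-Φ))ᴴ * fromBlocks A C Cᴴ (σ • 1) *
        fromRows (1 : Matrix m m R) (-Φ) + σ • (1 - Φᴴ * Φ) := by
    rw [conjTranspose_fromRows_one_neg_mul_fromBlocks_mul, Matrix.mul_smul, Matrix.mul_one,
      Matrix.smul_mul, smul_sub]
    abel
  rw [this]
  exact (hG.conjTranspose_mul_mul_same _).add
    ((posSemidef_one_sub_conjTranspose_mul_self hΦ).smul hσ)

end Matrix

theorem stmt7_general {n : ℕ} (P Bk Φ : Matrix (Fin n) (Fin n) ℝ) (hP : P.PosDef)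
    (d : Fin n → ℝ)
    (ρ σ ε : ℝ) (hσ : 0 < σ)
    (hG : (Matrix.fromBlocks
        (Matrix.diagonal d - (σ + ε) • (1 : Matrix (Fin n) (Fin n) ℝ)
          - Bkᵀ * P - P * Bk)
        (ρ • P) ((ρ • P)ᵀ) (σ • (1 : Matrix (Fin n) (Fin n) ℝ))).PosDef)
    (hΦ : ∀ x : Fin n → ℝ, ∑ i, (Φ.mulVec x i) ^ 2 ≤ ∑ i, (x i) ^ 2) :
    (Matrix.diagonal d - (Bk + ρ • Φ)ᵀ * P - P * (Bk + ρ • Φ)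
      - ε • (1 : Matrix (Fin n) (Fin n) ℝ)).PosSemidef := by
  have hPsymm : Pᵀ = P := hP.isHermitian
  rw [← conjTranspose_eq_transpose_of_trivial (ρ • P)] at hG
  have hcontr : ∀ x, star (Φ *ᵥ x) ⬝ᵥ (Φ *ᵥ x) ≤ star x ⬝ᵥ x := fun x ↦ by
    simpa [dotProduct, sq] using hΦ x
  have hpsd := posSemidef_add_smul_one_sub_of_fromBlocks hG.posSemidef hσ.le hcontr
  refine (congrArg PosSemidef ?_).mpr hpsd
  simp only [conjTranspose_eq_transpose_of_trivial, transpose_smul, hPsymm, transpose_add,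
    Matrix.add_mul, Matrix.mul_add, Matrix.smul_mul, Matrix.mul_smul, add_smul]
  abel

theorem stmt7 {n : ℕ} (P Bk Φ : Matrix (Fin n) (Fin n) ℝ) (hP : P.PosDef)
    (d : Fin n → ℝ) (hd : ∀ i, 0 < d i)
    (ρ σ ε : ℝ) (hρ : 0 < ρ) (hσ : 0 < σ) (hε : 0 < ε)
    (hG : (Matrix.fromBlocks
        (Matrix.diagonal d - (σ + ε) • (1 : Matrix (Fin n) (Fin n) ℝ)
          - Bkᵀ * P - P * Bk)
        (ρ • P) ((ρ • P)ᵀ) (σ • (1 : Matrix (Fin n) (Fin n) ℝ))).PosDef)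
    (hΦ : ∀ x : Fin n → ℝ, ∑ i, (Φ.mulVec x i) ^ 2 ≤ ∑ i, (x i) ^ 2) :
    (Matrix.diagonal d - (Bk + ρ • Φ)ᵀ * P - P * (Bk + ρ • Φ)
      - ε • (1 : Matrix (Fin n) (Fin n) ℝ)).PosSemidef :=
  stmt7_general P Bk Φ hP d ρ σ ε hσ hG hΦ
end
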